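/- Consider the FO-ANIL population outer-loop representation update B_{t+1} = B_t − β(1/n)∑_{i=1}^n (B_t w_{t,i} − B* w*_{t,i}) w_{t,i}ᵀ where w_{t,i} = Δ_t w_t + αB_tᵀB*w*_{t,i} and Δ_t = I_k − αB_tᵀB_t. Then the update gradient G_t := (1/β)(B_t − B_{t+1}) can be decomposed as G_t = −Δ̄_t S_t B_t + N_t, where Δ̄_t = I_d − αB_tB_tᵀ, S_t = α B*((1/n)∑ w*_{t,i}w*_{t,i}ᵀ)B*ᵀ is positive semi-definite, and N_t = (1/n)∑ Δ̄_t B_t w_t w_{t,i}ᵀ − (1/n)∑ Δ̄_t B* w*_{t,i} w_tᵀ Δ_t. -/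

import Mathlib

open Matrix

noncomputable def evNorm {n : Type*} [Fintype n] (v : n → ℝ) : ℝ :=
  Real.sqrt (∑ i, v i ^ 2)

noncomputable def specNorm {m n : Type*} [Fintype m] [Fintype n] (A : Matrix m n ℝ) : ℝ :=
  sSup {c : ℝ | ∃ v : n → ℝ, evNorm v = 1 ∧ c = evNorm (A.mulVec v)}

noncomputable def sigmaMin {m n : Type*} [Fintype m] [Fintype n] (A : Matrix m n ℝ) : ℝ :=
  sInf {c : ℝ | ∃ v : n → ℝ, evNorm v = 1 ∧ c = evNorm (A.mulVec v)}

section helpers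

lemma vmv_mulVec_left {m n p : Type*} [Fintype m] [Fintype n] [Fintype p]
    (A : Matrix m n ℝ) (v : n → ℝ) (u : p → ℝ) :
    vecMulVec (A *ᵥ v) u = A * vecMulVec v u := by
  ext i j
  simp [vecMulVec_apply, Matrix.mul_apply, Matrix.mulVec, dotProduct, Finset.sum_mul, mul_assoc]

lemma vmv_mulVec_right {m n p : Type*} [Fintype m] [Fintype n] [Fintype p]
    (u : m → ℝ) (A : Matrix n p ℝ) (v : p → ℝ) :
    vecMulVec u (A *ᵥ v) = vecMulVec u v * Aᵀ := by
  ext i j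
  simp only [vecMulVec_apply, Matrix.mul_apply, Matrix.mulVec, dotProduct,
    transpose_apply, Finset.mul_sum]
  exact Finset.sum_congr rfl fun l _ => by ring

lemma vmv_sub_left {m p : Type*} (u v : m → ℝ) (x : p → ℝ) :
    vecMulVec (u - v) x = vecMulVec u x - vecMulVec v x := by
  ext i j; simp [vecMulVec_apply, sub_mul]

lemma vmv_add_right {m p : Type*} (x : m → ℝ) (u v : p → ℝ) :
    vecMulVec x (u + v) = vecMulVec x u + vecMulVec x v := by
  ext i j; simp [vecMulVec_apply, mul_add]

lemma vmv_smul_right {m p : Type*} (x : m → ℝ) (c : ℝ) (u : p → ℝ) :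
    vecMulVec x (c • u) = c • vecMulVec x u := by
  ext i j; simp [vecMulVec_apply]; ring

lemma vmv_transpose {m p : Type*} (u : m → ℝ) (v : p → ℝ) :
    (vecMulVec u v)ᵀ = vecMulVec v u := by
  ext i j; simp [vecMulVec_apply, mul_comm]

lemma vmv_quad {m : Type*} [Fintype m] (u y : m → ℝ) :
    y ⬝ᵥ (vecMulVec u u) *ᵥ y = (u ⬝ᵥ y) ^ 2 := by
  simp only [dotProduct, Matrix.mulVec, vecMulVec_apply, sq, Finset.sum_mul]
  simp_rw [Finset.mul_sum]
  exact Finset.sum_congr rfl fun i _ => Finset.sum_congr rfl fun j _ => by ring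

lemma sum_mulVec' {ι m n : Type*} [Fintype n] (s : Finset ι)
    (f : ι → Matrix m n ℝ) (v : n → ℝ) :
    (∑ i ∈ s, f i) *ᵥ v = ∑ i ∈ s, f i *ᵥ v := by
  ext j
  simp only [Matrix.mulVec, dotProduct, Matrix.sum_apply, Finset.sum_mul,
    Finset.sum_apply]
  rw [Finset.sum_comm]

lemma dotProduct_sum' {ι m : Type*} [Fintype m] (s : Finset ι) (y : m → ℝ)
    (f : ι → m → ℝ) : y ⬝ᵥ (∑ i ∈ s, f i) = ∑ i ∈ s, y ⬝ᵥ f i := by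
  simp only [dotProduct, Finset.sum_apply, Finset.mul_sum]
  exact Finset.sum_comm

lemma aux_psd {d k n : ℕ} (Bstar : Matrix (Fin d) (Fin k) ℝ)
    (wstar : Fin n → Fin k → ℝ) (α : ℝ) (hα : 0 ≤ α) :
    (α • (Bstar * ((n : ℝ)⁻¹ • ∑ i, vecMulVec (wstar i) (wstar i)) * Bstarᵀ)).PosSemidef := by
  rw [posSemidef_iff_dotProduct_mulVec]
  constructor
  · rw [Matrix.IsHermitian, conjTranspose_eq_transpose_of_trivial]
    simp only [transpose_smul, transpose_mul, transpose_transpose, Matrix.transpose_sum,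
      vmv_transpose, Matrix.mul_assoc]
  · intro x
    rw [star_trivial]
    rw [smul_mulVec, dotProduct_smul, Matrix.mul_assoc, ← Matrix.mulVec_mulVec,
      dotProduct_mulVec, ← Matrix.mulVec_transpose, ← Matrix.mulVec_mulVec,
      smul_mulVec, dotProduct_smul, sum_mulVec', dotProduct_sum']
    simp_rw [vmv_quad]
    simp only [smul_eq_mul]
    positivity

lemma aux_eq {d k n : ℕ}
    (B Bstar : Matrix (Fin d) (Fin k) ℝ)
    (w : Fin k → ℝ) (wstar : Fin n → Fin k → ℝ)
    (α β : ℝ) (hβ : β ≠ 0)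
    (Δ : Matrix (Fin k) (Fin k) ℝ) (hΔ : Δ = 1 - α • (Bᵀ * B))
    (Δbar : Matrix (Fin d) (Fin d) ℝ) (hΔbar : Δbar = 1 - α • (B * Bᵀ))
    (wi : Fin n → Fin k → ℝ)
    (hwi : wi = fun i => Δ.mulVec w + α • (Bᵀ * Bstar).mulVec (wstar i)) :
    β⁻¹ • (B - (B - β • ((n : ℝ)⁻¹ •
        ∑ i, vecMulVec (B.mulVec (wi i) - Bstar.mulVec (wstar i)) (wi i)))) =
      -(Δbar * (α • (Bstar * ((n : ℝ)⁻¹ • ∑ i, vecMulVec (wstar i) (wstar i)) * Bstarᵀ)) * B) +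
        (((n : ℝ)⁻¹ • ∑ i, Δbar * (B * vecMulVec w (wi i))) -
          ((n : ℝ)⁻¹ • ∑ i, Δbar * (Bstar * vecMulVec (wstar i) w) * Δ)) := by
  rw [sub_sub_cancel, smul_smul, inv_mul_cancel₀ hβ, one_smul]
  have hBΔ : B * Δ = Δbar * B := by
    rw [hΔ, hΔbar]
    simp [Matrix.mul_sub, Matrix.sub_mul, Matrix.mul_smul, Matrix.smul_mul, Matrix.mul_assoc]
  have hΔBs : Δbar * Bstar = Bstar - α • (B * (Bᵀ * Bstar)) := by
    rw [hΔbar]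
    simp [Matrix.sub_mul, Matrix.smul_mul, Matrix.mul_assoc]
  have hΔT : Δᵀ = Δ := by
    rw [hΔ]; simp [transpose_sub, transpose_smul, transpose_mul]
  have key : ∀ i : Fin n,
      vecMulVec (B.mulVec (wi i) - Bstar.mulVec (wstar i)) (wi i) =
        Δbar * (B * vecMulVec w (wi i)) -
          Δbar * (Bstar * vecMulVec (wstar i) w) * Δ -
          α • (Δbar * (Bstar * (vecMulVec (wstar i) (wstar i) * (Bstarᵀ * B)))) := by
    intro i
    have h1 : B *ᵥ wi i - Bstar *ᵥ wstar i = Δbar *ᵥ (B *ᵥ w - Bstar *ᵥ wstar i) := by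
      rw [hwi]
      simp only [Matrix.mulVec_add, Matrix.mulVec_smul, Matrix.mulVec_mulVec,
        Matrix.mulVec_sub, hBΔ]
      rw [hΔBs, Matrix.sub_mulVec, smul_mulVec]
      abel
    have h2 : vecMulVec (wstar i) (wi i) =
        vecMulVec (wstar i) w * Δ +
          α • (vecMulVec (wstar i) (wstar i) * (Bstarᵀ * B)) := by
      rw [hwi]
      simp only [vmv_add_right, vmv_smul_right, vmv_mulVec_right, hΔT,
        transpose_mul, transpose_transpose]
    rw [h1, vmv_mulVec_left, vmv_sub_left, vmv_mulVec_left, vmv_mulVec_left, h2]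
    simp only [Matrix.mul_add, Matrix.mul_sub, Matrix.mul_smul, Matrix.mul_assoc]
    abel
  simp_rw [key]
  rw [Finset.sum_sub_distrib, Finset.sum_sub_distrib, smul_sub, smul_sub]
  have hS : Δbar * (α • (Bstar * ((n : ℝ)⁻¹ • ∑ i, vecMulVec (wstar i) (wstar i)) * Bstarᵀ)) * B
      = (n : ℝ)⁻¹ • ∑ i,
          α • (Δbar * (Bstar * (vecMulVec (wstar i) (wstar i) * (Bstarᵀ * B)))) := by
    simp only [Matrix.mul_smul, Matrix.smul_mul, Matrix.mul_sum, Matrix.sum_mul,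
      Matrix.mul_assoc, Finset.smul_sum]
    exact Finset.sum_congr rfl fun i _ => smul_comm _ _ _
  rw [hS]
  abel

end helpers

/-- decomposition of the FO-ANIL population outer-loop gradient as
`G_t = −Δ̄_t S_t B_t + N_t`, where `S_t` is positive semi-definite. -/
theorem stmt15 {d k n : ℕ} (hn : 0 < n)
    (B Bstar : Matrix (Fin d) (Fin k) ℝ) (hstar : Bstarᵀ * Bstar = 1)
    (w : Fin k → ℝ) (wstar : Fin n → Fin k → ℝ)
    (α β : ℝ) (hα : 0 < α) (hβ : 0 < β) :
    let Δ : Matrix (Fin k) (Fin k) ℝ := 1 - α • (Bᵀ * B)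
    let Δbar : Matrix (Fin d) (Fin d) ℝ := 1 - α • (B * Bᵀ)
    let wi : Fin n → Fin k → ℝ := fun i => Δ.mulVec w + α • (Bᵀ * Bstar).mulVec (wstar i)
    let Bnext : Matrix (Fin d) (Fin k) ℝ :=
      B - β • ((n : ℝ)⁻¹ • ∑ i, vecMulVec (B.mulVec (wi i) - Bstar.mulVec (wstar i)) (wi i))
    let G : Matrix (Fin d) (Fin k) ℝ := β⁻¹ • (B - Bnext)
    let S : Matrix (Fin d) (Fin d) ℝ :=
      α • (Bstar * ((n : ℝ)⁻¹ • ∑ i, vecMulVec (wstar i) (wstar i)) * Bstarᵀ)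
    let N : Matrix (Fin d) (Fin k) ℝ :=
      ((n : ℝ)⁻¹ • ∑ i, Δbar * (B * vecMulVec w (wi i))) -
        ((n : ℝ)⁻¹ • ∑ i, Δbar * (Bstar * vecMulVec (wstar i) w) * Δ)
    S.PosSemidef ∧ G = -(Δbar * S * B) + N := by
  intro Δ Δbar wi Bnext G S N
  exact ⟨aux_psd Bstar wstar α hα.le,
    aux_eq B Bstar w wstar α β hβ.ne' Δ rfl Δbar rfl wi rfl⟩
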